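/- arXiv:0805.0154 — 3 statements merged into one kernel-verified Lean document; each statement's English description precedes it below -/
import Mathlib

section
/- Let m be a universal probability. Then the Shannon entropy H(m) = -∑_{s∈{0,1}*} m(s) log₂ m(s) diverges to infinity, i.e., the partial sums are unbounded. -/
open Filter Topology

namespace Paper

/-- Finite binary strings. -/
abbrev Str := List Bool

/-- A computer: a partial recursive function on binary strings with prefix-free domain. -/
structure Computer where
  f : Str →. Str
  partrec : Partrec f
  prefixFree : ∀ p q : Str, (f p).Dom → (f q).Dom → p <+: q → p = q

/-- An optimal computer (universal self-delimiting Turing machine). -/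
structure OptimalComputer extends Computer where
  optimal : ∀ C : Computer, ∃ sim : ℕ, ∀ p s, s ∈ C.f p →
    ∃ p', s ∈ toComputer.f p' ∧ p'.length ≤ p.length + sim

/-- Prefix-free Kolmogorov complexity (program-size complexity) w.r.t. `U`. -/
noncomputable def Kc (U : OptimalComputer) (s : Str) : ℕ :=
  sInf {n | ∃ p : Str, p.length = n ∧ s ∈ U.f p}

/-- A semi-measure on binary strings: values in [0,1] with all finite partial sums ≤ 1. -/
def SemiMeasure (r : Str → ℝ) : Prop :=
  (∀ s, 0 ≤ r s ∧ r s ≤ 1) ∧ ∀ F : Finset Str, ∑ s ∈ F, r s ≤ 1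

/-- Lower-computability: approximability from below by a total recursive rational function. -/
def LowerComputable (r : Str → ℝ) : Prop :=
  ∃ f : ℕ → Str → ℚ, Computable₂ f ∧
    ∀ s : Str, (∀ n : ℕ, 0 ≤ f n s ∧ (f n s : ℝ) ≤ r s) ∧
      Tendsto (fun n => (f n s : ℝ)) atTop (nhds (r s))

/-- A lower-computable semi-measure. -/
def LCSemiMeasure (r : Str → ℝ) : Prop := SemiMeasure r ∧ LowerComputable r

/-- A universal probability: a lower-computable semi-measure dominating all
lower-computable semi-measures up to a positive multiplicative constant. -/
def UniversalProb (m : Str → ℝ) : Prop :=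
  LCSemiMeasure m ∧ ∀ r : Str → ℝ, LCSemiMeasure r → ∃ c : ℝ, 0 < c ∧ ∀ s, c * r s ≤ m s

/-- The first `n` bits of the base-two expansion of `T mod 1`
(the expansion with infinitely many zeros). -/
noncomputable def binPrefix (T : ℝ) (n : ℕ) : Str :=
  (List.range n).map (fun i => decide (⌊Int.fract T * 2 ^ (i + 1)⌋ % 2 = 1))

/-- A real is right-computable if it is the limit from above of a recursive
sequence of rationals. -/
def RightComputableReal (T : ℝ) : Prop :=
  ∃ g : ℕ → ℚ, Computable g ∧ (∀ n, T ≤ (g n : ℝ)) ∧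
    Tendsto (fun n => (g n : ℝ)) atTop (nhds T)

/-- A real is left-computable if its negation is right-computable. -/
def LeftComputableReal (T : ℝ) : Prop := RightComputableReal (-T)

/-- A computable real number. -/
def ComputableReal (T : ℝ) : Prop :=
  ∃ f : ℕ → ℚ, Computable f ∧ ∀ n : ℕ, |T - (f n : ℝ)| < (2 : ℝ)⁻¹ ^ n

/-- A recursively enumerable set of binary strings. -/
def REset (A : Set Str) : Prop :=
  ∃ g : Str →. Unit, Partrec g ∧ ∀ s, (g s).Dom ↔ s ∈ A

/-- `T` is weakly Chaitin `D`-random. -/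
noncomputable def WeaklyChaitinDRandom (U : OptimalComputer) (D T : ℝ) : Prop :=
  ∃ c : ℕ, ∀ n : ℕ, D * n - c ≤ Kc U (binPrefix T n)

/-- `T` is `D`-compressible. -/
noncomputable def DCompressible (U : OptimalComputer) (D T : ℝ) : Prop :=
  Filter.atTop.limsup (fun n : ℕ => (Kc U (binPrefix T n) : ℝ) / n) ≤ D

/-!
Let `r s = 2 ^ (-|s|) / ((|s| + 1) * (|s| + 2))` (`heavyTail`). Its mass on strings of length `n` is
`1 / (n + 1) - 1 / (n + 2)`, so `r` is a semi-measure, and its values are computable rationals,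
so `r` is lower-computable; hence `c * r ≤ m` for some `c > 0`. Since `∑ m ≤ 1`, at most `2 ^ n` of
the `2 ^ (n + 1)` strings of length `n + 1` have `m s > 2 ^ (-n)`. Each of the remaining ones
contributes at least `n * m s ≥ n * c * r s` to the entropy, so strings of length `n + 1`
contribute about `c / (2 * n)`, and the harmonic series diverges.
-/

open Encodable Finset

theorem natAbs_eq_encode_add_one_div_two (z : ℤ) : z.natAbs = (encode z + 1) / 2 := by
  cases z with
  | ofNat n => show n = (2 * n + 1) / 2; omega
  | negSucc n => show n + 1 = (2 * n + 1 + 1) / 2; omega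

/-- The code of `q` under `Rat.instEncodable`. The `Primcodable ℚ` instance instead numbers `ℚ`
densely, by counting the codes `fracCode` takes below `fracCode q`
(`ofNat_countP_range_fracCode`). -/
def fracCode (q : ℚ) : ℕ := Nat.pair (encode q.num) q.den

theorem mem_range_fracCode_iff (y : ℕ) :
    y ∈ Set.range fracCode ↔
      0 < y.unpair.2 ∧ ((y.unpair.1 + 1) / 2).Coprime y.unpair.2 := by
  constructor
  · rintro ⟨q, rfl⟩
    simpa [fracCode, ← natAbs_eq_encode_add_one_div_two] using ⟨q.pos, q.reduced⟩
  · rintro ⟨hd, hc⟩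
    refine ⟨⟨Denumerable.ofNat ℤ y.unpair.1, y.unpair.2, hd.ne', ?_⟩, ?_⟩
    · rwa [natAbs_eq_encode_add_one_div_two, Denumerable.encode_ofNat]
    · change Nat.pair (encode (Denumerable.ofNat ℤ y.unpair.1)) y.unpair.2 = y
      rw [Denumerable.encode_ofNat, Nat.pair_unpair]

theorem coprime_iff_forall_lt (a b : ℕ) :
    a.Coprime b ↔ ∀ k < a + b + 1, k ∣ a → k ∣ b → k = 1 := by
  refine ⟨fun h k _ hka hkb => Nat.eq_one_of_dvd_coprimes h hka hkb,
    fun h => h _ ?_ (Nat.gcd_dvd_left a b) (Nat.gcd_dvd_right a b)⟩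
  rcases Nat.eq_zero_or_pos a with rfl | ha
  · simp
  · have := Nat.gcd_le_left b ha
    omega

theorem primrecRel_dvd : PrimrecRel ((· ∣ ·) : ℕ → ℕ → Prop) :=
  (Primrec.eq.comp (Primrec.nat_mod.comp Primrec.snd Primrec.fst) (Primrec.const 0)).of_eq
    fun _ => Nat.dvd_iff_mod_eq_zero.symm

theorem primrecRel_coprime : PrimrecRel Nat.Coprime := by
  have hdiv : PrimrecRel fun (k : ℕ) (p : ℕ × ℕ) => k ∣ p.1 → k ∣ p.2 → k = 1 :=
    (((primrecRel_dvd.comp Primrec.fst (Primrec.fst.comp Primrec.snd)).not.or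
      (primrecRel_dvd.comp Primrec.fst (Primrec.snd.comp Primrec.snd)).not).or
      (Primrec.eq.comp Primrec.fst (Primrec.const 1))).of_eq fun _ => by tauto
  exact (hdiv.forall_mem_list.comp (Primrec.list_range.comp (Primrec.nat_add.comp
    (Primrec.nat_add.comp Primrec.fst Primrec.snd) (Primrec.const 1))) Primrec.id).of_eq
    fun p => by simp only [List.mem_range, id, coprime_iff_forall_lt]

theorem primrecPred_mem_range_fracCode : PrimrecPred (· ∈ Set.range fracCode) := by
  have hnum : Primrec fun y : ℕ => (y.unpair.1 + 1) / 2 :=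
    Primrec.nat_div.comp (Primrec.succ.comp (Primrec.fst.comp Primrec.unpair)) (Primrec.const 2)
  have hden : Primrec fun y : ℕ => y.unpair.2 := Primrec.snd.comp Primrec.unpair
  exact ((Primrec.nat_lt.comp (Primrec.const 0) hden).and
    (primrecRel_coprime.comp hnum hden)).of_eq fun y => (mem_range_fracCode_iff y).symm

open Classical in
theorem ofNat_countP_range_fracCode (q : ℚ) :
    Denumerable.ofNat ℚ ((List.range (fracCode q)).countP (· ∈ Set.range fracCode)) = q := by
  conv_rhs => rw [← Denumerable.ofNat_encode (α := ℚ) q]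
  exact congrArg _ (List.countP_congr fun _ _ => by simp only [decide_eq_true_eq]; rfl)

theorem primrec_inv_natCast : Primrec fun d : ℕ => (d : ℚ)⁻¹ := by
  classical
  have hcount : Primrec fun n : ℕ => (List.range n).countP (· ∈ Set.range fracCode) :=
    (Primrec.list_length.comp ((Primrec.listFilter primrecPred_mem_range_fracCode).comp
      Primrec.list_range)).of_eq fun n => (List.countP_eq_length_filter ..).symm
  have hcode : ∀ d : ℕ, d ≠ 0 → fracCode (d : ℚ)⁻¹ = Nat.pair 2 d := fun d hd => by
    simp [fracCode, Rat.inv_natCast_num_of_pos (Nat.pos_of_ne_zero hd),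
      Rat.inv_natCast_den_of_pos (Nat.pos_of_ne_zero hd), show encode (1 : ℤ) = 2 from rfl]
  have hpair : Primrec fun d : ℕ => Nat.pair 2 d := Primrec₂.natPair.comp (Primrec.const 2) .id
  refine (Primrec.ite (Primrec.eq.comp Primrec.id (Primrec.const 0)) (Primrec.const 0)
    ((Primrec.ofNat ℚ).comp (hcount.comp hpair))).of_eq fun d => ?_
  dsimp only [id]
  split_ifs with hd
  · simp [hd]
  · rw [← hcode d hd, ofNat_countP_range_fracCode]

def stringsOfLength (n : ℕ) : Finset Str :=
  (univ : Finset (List.Vector Bool n)).map ⟨List.Vector.toList, List.Vector.toList_injective⟩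

theorem mem_stringsOfLength {n : ℕ} {s : Str} : s ∈ stringsOfLength n ↔ s.length = n := by
  simp only [stringsOfLength, Finset.mem_map, mem_univ, true_and, Function.Embedding.coeFn_mk]
  exact ⟨fun ⟨v, hv⟩ => hv ▸ v.toList_length, fun h => ⟨⟨s, h⟩, rfl⟩⟩

theorem card_stringsOfLength (n : ℕ) : #(stringsOfLength n) = 2 ^ n := by
  rw [stringsOfLength, card_map, card_univ, card_vector, Fintype.card_bool]

def tailDen (n : ℕ) : ℕ := 2 ^ n * ((n + 1) * (n + 2))

theorem tailDen_pos (n : ℕ) : 0 < tailDen n := by unfold tailDen; positivity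

noncomputable def heavyTail (s : Str) : ℝ := (tailDen s.length : ℝ)⁻¹

theorem sum_heavyTail_length_eq_le (F : Finset Str) (n : ℕ) :
    ∑ s ∈ F with s.length = n, heavyTail s ≤ 1 / (n + 1) - 1 / (n + 2) := by
  have hcard : #{s ∈ F | s.length = n} ≤ 2 ^ n := by
    rw [← card_stringsOfLength n]
    exact card_le_card fun s hs => mem_stringsOfLength.mpr (mem_filter.mp hs).2
  calc ∑ s ∈ F with s.length = n, heavyTail s
      = #{s ∈ F | s.length = n} * (tailDen n : ℝ)⁻¹ := by
        rw [sum_congr rfl fun s hs => by rw [heavyTail, (mem_filter.mp hs).2], sum_const,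
          nsmul_eq_mul]
    _ ≤ 2 ^ n * (tailDen n : ℝ)⁻¹ := by gcongr; exact_mod_cast hcard
    _ = 1 / (n + 1) - 1 / (n + 2) := by unfold tailDen; push_cast; field_simp; ring

theorem semiMeasure_heavyTail : SemiMeasure heavyTail := by
  refine ⟨fun s => ⟨by unfold heavyTail; positivity, inv_le_one_of_one_le₀ ?_⟩, fun F => ?_⟩
  · exact_mod_cast tailDen_pos s.length
  obtain ⟨N, hN⟩ : ∃ N, ∀ s ∈ F, s.length ∈ range N :=
    ⟨F.sup List.length + 1, fun s hs => mem_range.mpr (Nat.lt_succ_of_le (le_sup hs))⟩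
  calc ∑ s ∈ F, heavyTail s
      = ∑ n ∈ range N, ∑ s ∈ F with s.length = n, heavyTail s :=
        (sum_fiberwise_of_maps_to hN _).symm
    _ ≤ ∑ n ∈ range N, (1 / ((n : ℝ) + 1) - 1 / ((n + 1 : ℕ) + 1)) :=
        sum_le_sum fun n _ => (sum_heavyTail_length_eq_le F n).trans_eq (by push_cast; ring)
    _ = 1 - 1 / (N + 1) := by rw [sum_range_sub']; simp
    _ ≤ 1 := by simp; positivity

theorem primrec_tailDen : Primrec tailDen :=
  Primrec.nat_mul.comp (Primrec₂.unpaired'.mp Nat.Primrec.pow |>.comp (Primrec.const 2) Primrec.id)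
    (Primrec.nat_mul.comp Primrec.succ (Primrec.nat_add.comp Primrec.id (Primrec.const 2)))

theorem lowerComputable_heavyTail : LowerComputable heavyTail := by
  refine ⟨fun _ s => (tailDen s.length : ℚ)⁻¹, ?_, fun s => ⟨fun _ => ⟨by positivity, ?_⟩, ?_⟩⟩
  · exact (primrec_inv_natCast.comp (primrec_tailDen.comp
      (Primrec.list_length.comp Primrec.snd))).to_comp
  · simp [heavyTail]
  · simp [heavyTail]

theorem lcSemiMeasure_heavyTail : LCSemiMeasure heavyTail :=
  ⟨semiMeasure_heavyTail, lowerComputable_heavyTail⟩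

theorem natCast_mul_le_neg_mul_logb {a x : ℝ} (n : ℕ) (ha : 0 < a) (hax : a ≤ x)
    (hx : x ≤ (2 ^ n)⁻¹) : n * a ≤ -(x * Real.logb 2 x) := by
  have hlog : Real.logb 2 x ≤ -n :=
    calc Real.logb 2 x ≤ Real.logb 2 (2 ^ n)⁻¹ :=
          Real.logb_le_logb_of_le (by norm_num) (ha.trans_le hax) hx
      _ = -n := by simp [Real.logb_inv, Real.logb_pow]
  nlinarith

theorem SemiMeasure.card_filter_lt_mul_le_one {m : Str → ℝ} (hm : SemiMeasure m)
    (F : Finset Str) (a : ℝ) :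
    #{s ∈ F | a < m s} * a ≤ 1 :=
  calc #{s ∈ F | a < m s} * a = ∑ s ∈ F with a < m s, a := by rw [sum_const, nsmul_eq_mul]
    _ ≤ ∑ s ∈ F with a < m s, m s := sum_le_sum fun s hs => (mem_filter.mp hs).2.le
    _ ≤ 1 := hm.2 _

noncomputable def smallMassStrings (m : Str → ℝ) (n : ℕ) : Finset Str :=
  {s ∈ stringsOfLength (n + 1) | m s ≤ (2 ^ n)⁻¹}

theorem length_of_mem_smallMassStrings {m : Str → ℝ} {n : ℕ} {s : Str}
    (hs : s ∈ smallMassStrings m n) : s.length = n + 1 :=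
  mem_stringsOfLength.mp (mem_filter.mp hs).1

theorem SemiMeasure.pow_le_card_smallMassStrings {m : Str → ℝ} (hm : SemiMeasure m) (n : ℕ) :
    2 ^ n ≤ #(smallMassStrings m n) := by
  have hlarge : #{s ∈ stringsOfLength (n + 1) | ¬ m s ≤ (2 ^ n)⁻¹} ≤ 2 ^ n := by
    have h := hm.card_filter_lt_mul_le_one (stringsOfLength (n + 1)) (2 ^ n)⁻¹
    simp only [not_le]
    rw [mul_inv_le_iff₀ (by positivity), one_mul] at h
    exact_mod_cast h
  have htotal := card_filter_add_card_filter_not (s := stringsOfLength (n + 1))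
    (fun s => m s ≤ (2 ^ n)⁻¹)
  rw [card_stringsOfLength, pow_succ] at htotal
  unfold smallMassStrings
  omega

theorem div_le_sum_smallMassStrings {m : Str → ℝ} {c : ℝ} (hm : SemiMeasure m) (hc : 0 < c)
    (hcm : ∀ s, c * heavyTail s ≤ m s) (n : ℕ) :
    c / 24 * (1 / (n + 1)) ≤ ∑ s ∈ smallMassStrings m (n + 1), -(m s * Real.logb 2 (m s)) := by
  set a := c * (tailDen (n + 2) : ℝ)⁻¹
  have ha : 0 < a := mul_pos hc (inv_pos.mpr (Nat.cast_pos.mpr (tailDen_pos _)))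
  have hterm : ∀ s ∈ smallMassStrings m (n + 1), (n + 1 : ℕ) * a ≤ -(m s * Real.logb 2 (m s)) :=
    fun s hs => natCast_mul_le_neg_mul_logb (n + 1) ha
      (by simpa [heavyTail, length_of_mem_smallMassStrings hs] using hcm s) (mem_filter.mp hs).2
  have hcard : (2 : ℝ) ^ (n + 1) ≤ #(smallMassStrings m (n + 1)) := by
    exact_mod_cast hm.pow_le_card_smallMassStrings (n + 1)
  calc c / 24 * (1 / (n + 1)) ≤ 2 ^ (n + 1) * ((n + 1 : ℕ) * a) := by
        simp only [a, tailDen]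
        push_cast
        rw [div_mul_div_comm, mul_one, pow_succ _ (n + 1)]
        field_simp
        nlinarith [mul_nonneg hc.le (Nat.cast_nonneg (α := ℝ) n)]
    _ ≤ #(smallMassStrings m (n + 1)) * ((n + 1 : ℕ) * a) := by gcongr
    _ ≤ _ := by rw [← nsmul_eq_mul, ← sum_const]; exact sum_le_sum hterm

/-- The Shannon entropy `-∑ s, m s * log₂ (m s)` of any universal probability `m`
diverges to infinity: its partial sums are unbounded. -/
theorem shannon_entropy_of_universal_diverges (m : Str → ℝ) (hm : UniversalProb m) :
    ∀ B : ℝ, ∃ F : Finset Str, B ≤ ∑ s ∈ F, -(m s * Real.logb 2 (m s)) := by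
  intro B
  obtain ⟨⟨hsemi, -⟩, hdom⟩ := hm
  obtain ⟨c, hc, hcm⟩ := hdom heavyTail lcSemiMeasure_heavyTail
  obtain ⟨N, hN⟩ := (Real.tendsto_sum_range_one_div_nat_succ_atTop.eventually_ge_atTop
    (24 * B / c)).exists
  have hdisj : (range N : Set ℕ).PairwiseDisjoint fun n => smallMassStrings m (n + 1) :=
    fun i _ j _ hij => disjoint_left.mpr fun s hsi hsj => hij <| by
      simpa using (length_of_mem_smallMassStrings hsi).symm.trans
        (length_of_mem_smallMassStrings hsj)
  refine ⟨(range N).biUnion fun n => smallMassStrings m (n + 1), ?_⟩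
  calc B = c / 24 * (24 * B / c) := by field_simp
    _ ≤ c / 24 * ∑ n ∈ range N, 1 / ((n : ℝ) + 1) := by gcongr
    _ ≤ ∑ n ∈ range N, ∑ s ∈ smallMassStrings m (n + 1), -(m s * Real.logb 2 (m s)) := by
      rw [mul_sum]
      exact sum_le_sum fun n _ => div_le_sum_smallMassStrings hsemi hc hcm n
    _ = _ := (sum_biUnion hdisj).symm

end Paper
end

section
/- Let A be an infinite recursively enumerable subset of {0,1}* and f : ℕ⁺ → ℕ a total recursive function with f(n) → ∞. Then ∑_{p : U(p) ∈ A} f(|p|) 2^{-|p|} diverges to infinity, where U is an optimal (universal self-delimiting) computer. -/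
open Filter Topology

namespace Paper

/-!
For each `m`, computably pick `n m` such that `f ≥ m * 2 ^ (2m+1)` on the window
`[n m, n m + 2m + 1]`, and let a computer print, on input `1^m 0 w` with `|w| = n m + 1`, the
`w`-th element of a computable injective enumeration of `A`. Simulating it, `U` has `2 ^ (n m + 1)`
distinct programs with outputs in `A`, all of length `≤ n m + 2m + 1` once `m > sim`. Fewer than
`2 ^ (n m)` strings are shorter than `n m`, so at least `2 ^ (n m)` of these programs have length
in the window, and each of them contributes at least `m * 2 ^ (2m+1) * 2 ^ -(n m + 2m + 1)`:
the partial sum is at least `m`.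
-/

def strsOfLength (n : ℕ) : Finset Str :=
  (Finset.univ : Finset (List.Vector Bool n)).map ⟨List.Vector.toList, List.Vector.toList_injective⟩

@[simp]
theorem mem_strsOfLength {n : ℕ} {p : Str} : p ∈ strsOfLength n ↔ p.length = n :=
  ⟨fun h => by obtain ⟨v, -, rfl⟩ := Finset.mem_map.1 h; exact v.toList_length,
    fun h => Finset.mem_map.2 ⟨⟨p, h⟩, Finset.mem_univ _, rfl⟩⟩

@[simp]
theorem card_strsOfLength (n : ℕ) : (strsOfLength n).card = 2 ^ n := by
  simp [strsOfLength, card_vector]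

theorem card_filter_length_lt_lt (S : Finset Str) (n : ℕ) :
    (S.filter (·.length < n)).card < 2 ^ n :=
  calc (S.filter (·.length < n)).card
      ≤ ((Finset.range n).biUnion strsOfLength).card :=
        Finset.card_le_card fun p hp => by simpa using (Finset.mem_filter.1 hp).2
    _ ≤ ∑ l ∈ Finset.range n, 2 ^ l := by
        simpa using Finset.card_biUnion_le (s := Finset.range n) (t := strsOfLength)
    _ < 2 ^ n := Nat.geomSum_lt le_rfl fun k hk => Finset.mem_range.1 hk

theorem le_sum_of_two_pow_succ_le_card {S : Finset Str} {w : Str → ℝ} {n : ℕ} {c : ℝ}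
    (hS : 2 ^ (n + 1) ≤ S.card) (hw : ∀ p ∈ S, 0 ≤ w p)
    (hc : ∀ p ∈ S, n ≤ p.length → c ≤ w p) (hc0 : 0 ≤ c) :
    2 ^ n * c ≤ ∑ p ∈ S, w p := by
  have hlong : 2 ^ n ≤ (S.filter (n ≤ ·.length)).card := by
    have hsplit := Finset.card_filter_add_card_filter_not (s := S) (n ≤ ·.length)
    have hshort := card_filter_length_lt_lt S n
    simp only [not_le] at hsplit
    rw [pow_succ] at hS
    omega
  set long := S.filter (n ≤ ·.length)
  calc 2 ^ n * c ≤ long.card * c := by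
        gcongr; exact_mod_cast hlong
    _ ≤ ∑ p ∈ long, w p := by
        simpa using Finset.card_nsmul_le_sum long w c fun p hp =>
          hc p (Finset.mem_filter.1 hp).1 (Finset.mem_filter.1 hp).2
    _ ≤ ∑ p ∈ S, w p :=
        Finset.sum_le_sum_of_subset_of_nonneg (Finset.filter_subset _ _) fun p hp _ => hw p hp

section Computability

open Nat.Partrec (Code)
open Encodable

variable {α σ : Type*} [Primcodable α] [Primcodable σ]

theorem computable_decide_forall_lt {p : α → ℕ → Bool} (hp : Computable₂ p) :
    Computable₂ fun a n => decide (∀ k < n, p a k = true) := by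
  have hrec : Computable fun an : α × ℕ =>
      Nat.rec (motive := fun _ => Bool) true (fun k b => b && p an.1 k) an.2 :=
    Computable.nat_rec Computable.snd (Computable.const true)
      (((Primrec.dom_bool₂ (· && ·)).to_comp).comp (Computable.snd.comp Computable.snd)
        (hp.comp (Computable.fst.comp Computable.fst) (Computable.fst.comp Computable.snd))).to₂
  refine hrec.to₂.of_eq fun an => ?_
  obtain ⟨a, n⟩ := an
  dsimp only
  induction n with
  | zero => simp
  | succ n ih => simp only [ih, Nat.lt_succ_iff_lt_or_eq, or_imp, forall_and, forall_eq]; simp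

theorem exists_computable_window {f : ℕ → ℕ} (hf : Computable f) (hlim : Tendsto f atTop atTop)
    {T L : ℕ → ℕ} (hT : Computable T) (hL : Computable L) :
    ∃ n : ℕ → ℕ, Computable n ∧ ∀ m, ∀ k ≤ L m, T m ≤ f (n m + k) := by
  let good (m n : ℕ) : Bool := decide (∀ k < L m + 1, decide (T m ≤ f (n + k)) = true)
  have hgood : Computable₂ good := by
    have hle : Computable₂ fun (mn : ℕ × ℕ) (k : ℕ) => decide (T mn.1 ≤ f (mn.2 + k)) :=
      ((Primrec.nat_le.decide.to_comp).comp (hT.comp (Computable.fst.comp Computable.fst))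
        (hf.comp ((Primrec.nat_add.to_comp).comp (Computable.snd.comp Computable.fst)
          Computable.snd))).to₂
    exact ((computable_decide_forall_lt hle).comp Computable.id
      (Computable.succ.comp (hL.comp Computable.fst))).to₂
  have hdom : ∀ m, (Nat.rfind fun n => Part.some (good m n)).Dom := fun m => by
    obtain ⟨N, hN⟩ := eventually_atTop.1 (hlim.eventually_ge_atTop (T m))
    exact Nat.rfind_dom'.2 ⟨N, by simp [good, fun k => hN (N + k) (Nat.le_add_right N k)]⟩
  refine ⟨fun m => (Nat.rfind fun n => Part.some (good m n)).get (hdom m),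
    (Partrec.rfind hgood.partrec₂).of_eq_tot fun m => Part.get_mem _, fun m k hk => ?_⟩
  have hspec := Nat.rfind_spec (Part.get_mem (hdom m))
  simp only [Part.mem_some_iff, good, eq_comm (a := true), decide_eq_true_eq] at hspec ⊢
  exact hspec k (Nat.lt_succ_of_le hk)

/-- Dovetailing: `E ⟨k, x⟩ = some a` when `x` encodes `a` and `g a` halts within `k` steps. -/
theorem exists_computable_enum_of_partrec {g : α →. σ} (hg : Partrec g) :
    ∃ E : ℕ → Option α, Computable E ∧ ∀ a, (g a).Dom ↔ ∃ t, E t = some a := by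
  obtain ⟨c, hc⟩ := Code.exists_code.1 hg
  refine ⟨fun t => (c.evaln t.unpair.1 t.unpair.2).bind fun _ => decode t.unpair.2, ?_, fun a => ?_⟩
  · exact Computable.option_bind ((Code.primrec_evaln.to_comp).comp
      (((Computable.fst.comp Computable.unpair).pair (Computable.const c)).pair
        (Computable.snd.comp Computable.unpair)))
      ((Computable.decode.comp (Computable.snd.comp (Computable.unpair.comp Computable.fst))).to₂)
  have heval : ∀ a, c.eval (encode a) = (g a).map encode := fun a => by simp [hc]
  constructor
  · intro ha
    obtain ⟨v, hv⟩ := Part.dom_iff_mem.1 (show (c.eval (encode a)).Dom by simpa [heval] using ha)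
    obtain ⟨k, hk⟩ := Code.evaln_complete.1 hv
    exact ⟨Nat.pair k (encode a), by simp [Option.mem_def.1 hk]⟩
  · rintro ⟨t, ht⟩
    obtain ⟨v, hv, hdec⟩ := Option.bind_eq_some_iff.1 ht
    have hdom : (c.eval t.unpair.2).Dom := Part.dom_iff_mem.2 ⟨v, Code.evaln_sound hv⟩
    rw [hc] at hdom
    simp only [hdec] at hdom
    simpa using hdom

theorem computable_decide_mem [DecidableEq α] :
    Computable₂ fun (l : List α) a => decide (a ∈ l) := by
  have h := (PrimrecRel.exists_mem_list (Primrec.eq (α := α))).decide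
  exact h.to_comp.of_eq fun la => by simp

theorem exists_computable_injective_of_enum [DecidableEq α] {A : Set α} (hA : A.Infinite)
    {E : ℕ → Option α} (hE : Computable E) (hEA : ∀ a, a ∈ A ↔ ∃ t, E t = some a) :
    ∃ e : ℕ → α, Computable e ∧ Function.Injective e ∧ ∀ n, e n ∈ A := by
  let newAt (l : List α) (t : ℕ) : Option α := (E t).bind fun a => if a ∈ l then none else some a
  have hnew : Computable₂ fun (lt : List α × ℕ) (a : α) =>
      if a ∈ lt.1 then (none : Option α) else some a := by
    have h : Computable fun (q : (List α × ℕ) × α) =>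
        cond (decide (q.2 ∈ q.1.1)) (none : Option α) (some q.2) :=
      Computable.cond (computable_decide_mem.comp (Computable.fst.comp Computable.fst)
        Computable.snd) (Computable.const none) (Computable.option_some.comp Computable.snd)
    exact h.of_eq fun q => by simp only [Bool.cond_decide]
  have hnewAt : Computable₂ newAt := Computable.option_bind (hE.comp Computable.snd) hnew
  have hdom : ∀ l, (Nat.rfindOpt (newAt l)).Dom := fun l => by
    obtain ⟨a, haA, hal⟩ := hA.exists_notMem_finset l.toFinset
    obtain ⟨t, ht⟩ := (hEA a).1 haA
    exact Nat.rfindOpt_dom.2 ⟨t, a, by simp_all [newAt]⟩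
  let fresh (l : List α) : α := (Nat.rfindOpt (newAt l)).get (hdom l)
  have hfresh : Computable fresh :=
    (Partrec.rfindOpt hnewAt).of_eq_tot fun l => Part.get_mem _
  have fresh_spec : ∀ l, fresh l ∈ A ∧ fresh l ∉ l := fun l => by
    obtain ⟨t, ht⟩ := Nat.rfindOpt_spec (Part.get_mem (hdom l))
    obtain ⟨a, hEt, hnew⟩ := Option.bind_eq_some_iff.1 ht
    by_cases hal : a ∈ l
    · simp [hal] at hnew
    · simp only [hal, if_false, Option.some_inj] at hnew
      subst hnew
      exact ⟨(hEA _).2 ⟨t, hEt⟩, hal⟩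
  let prefixes (n : ℕ) : List α := Nat.rec [] (fun _ l => fresh l :: l) n
  have hprefixes : Computable prefixes :=
    Computable.nat_rec Computable.id (Computable.const [])
      ((Computable.list_cons.comp (hfresh.comp (Computable.snd.comp Computable.snd))
        (Computable.snd.comp Computable.snd)).to₂)
  have mem_prefixes : ∀ {i j}, i < j → fresh (prefixes i) ∈ prefixes j := by
    intro i j hij
    induction j with
    | zero => omega
    | succ j ih =>
      rcases Nat.lt_succ_iff_lt_or_eq.1 hij with h | rfl
      · exact List.mem_cons_of_mem _ (ih h)
      · exact List.mem_cons_self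
  refine ⟨fun n => fresh (prefixes n), hfresh.comp hprefixes, fun i j hij => ?_,
    fun n => (fresh_spec _).1⟩
  change fresh (prefixes i) = fresh (prefixes j) at hij
  by_contra hne
  rcases Ne.lt_or_gt hne with h | h
  · exact (fresh_spec (prefixes j)).2 (hij ▸ mem_prefixes h)
  · exact (fresh_spec (prefixes i)).2 (hij.symm ▸ mem_prefixes h)

end Computability

def blockProgram (m : ℕ) (w : Str) : Str := List.replicate m true ++ false :: w

@[simp]
theorem length_blockProgram (m : ℕ) (w : Str) : (blockProgram m w).length = m + 1 + w.length := by
  simp [blockProgram]; omega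

theorem idxOf_false_blockProgram (m : ℕ) (w : Str) : (blockProgram m w).idxOf false = m := by
  induction m with
  | zero => simp [blockProgram]
  | succ m ih => simp_all [blockProgram, List.replicate_succ, List.idxOf_cons_ne]

theorem drop_blockProgram (m : ℕ) (w : Str) : (blockProgram m w).drop (m + 1) = w := by
  simp [blockProgram, List.drop_append]

def blockOutput (len : ℕ → ℕ) (out : Str → Str) (p : Str) : Option Str :=
  if p.length = p.idxOf false + 1 + len (p.idxOf false) then some (out (p.drop (p.idxOf false + 1)))
  else none

theorem blockOutput_blockProgram {len : ℕ → ℕ} (out : Str → Str) {m : ℕ} {w : Str}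
    (hw : w.length = len m) : blockOutput len out (blockProgram m w) = some (out w) := by
  simp [blockOutput, idxOf_false_blockProgram, drop_blockProgram, hw]

theorem computable_blockOutput {len : ℕ → ℕ} {out : Str → Str} (hlen : Computable len)
    (hout : Computable out) : Computable (blockOutput len out) := by
  have hidx : Computable fun p : Str => p.idxOf false :=
    (Primrec.list_idxOf.comp (Primrec.const false) Primrec.id).to_comp
  have hsucc : Computable fun p : Str => p.idxOf false + 1 := Computable.succ.comp hidx
  refine (Computable.cond
    ((Primrec.eq.decide.to_comp).comp Computable.list_length
      ((Primrec.nat_add.to_comp).comp hsucc (hlen.comp hidx)))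
    (Computable.option_some.comp (hout.comp ((Primrec.list_drop.to_comp).comp hsucc Computable.id)))
    (Computable.const none)).of_eq fun p => ?_
  simp [blockOutput, Bool.cond_decide]

theorem blockOutput_prefixFree (len : ℕ → ℕ) (out : Str → Str) (p q : Str)
    (hp : (blockOutput len out p).isSome) (hq : (blockOutput len out q).isSome) (hpq : p <+: q) :
    p = q := by
  simp only [blockOutput, Option.isSome_ite] at hp hq
  -- `idxOf false p = p.length` if `false ∉ p`, which the length test excludes.
  have hmem : false ∈ p := List.idxOf_lt_length_iff.1 (by omega)
  obtain ⟨t, rfl⟩ := hpq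
  rw [List.idxOf_append_of_mem hmem] at hq
  exact (List.prefix_append p t).eq_of_length (by omega)

def blockComputer {len : ℕ → ℕ} {out : Str → Str} (hlen : Computable len)
    (hout : Computable out) : Computer where
  f p := blockOutput len out p
  partrec := (computable_blockOutput hlen hout).ofOption
  prefixFree p q hp hq := blockOutput_prefixFree len out p q (by simpa using hp) (by simpa using hq)

theorem mem_blockComputer {len : ℕ → ℕ} {out : Str → Str} (hlen : Computable len)
    (hout : Computable out) {m : ℕ} {w : Str} (hw : w.length = len m) :
    out w ∈ (blockComputer hlen hout).f (blockProgram m w) := by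
  simp [blockComputer, blockOutput_blockProgram out hw]

theorem REset.exists_computable_injective {A : Set Str} (hre : REset A) (hA : A.Infinite) :
    ∃ e : ℕ → Str, Computable e ∧ Function.Injective e ∧ ∀ n, e n ∈ A := by
  obtain ⟨g, hg, hgA⟩ := hre
  obtain ⟨E, hE, hEg⟩ := exists_computable_enum_of_partrec hg
  exact exists_computable_injective_of_enum hA hE fun s => (hgA s).symm.trans (hEg s)

theorem Computer.exists_finset_programs {ι : Type*} (U : Computer) {I : Finset ι} {out : ι → Str}
    (hout : Set.InjOn out I) {L : ℕ} (h : ∀ i ∈ I, ∃ p, out i ∈ U.f p ∧ p.length ≤ L) :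
    ∃ S : Finset Str, S.card = I.card ∧ ∀ p ∈ S, p.length ≤ L ∧ ∃ i ∈ I, out i ∈ U.f p := by
  choose! prog hprog hlen using h
  refine ⟨I.image prog, Finset.card_image_of_injOn fun i hi j hj hij => ?_, ?_⟩
  · exact hout hi hj (Part.mem_unique (hprog i hi) (hij ▸ hprog j hj))
  · simp only [Finset.mem_image, forall_exists_index, and_imp]
    rintro _ i hi rfl
    exact ⟨hlen i hi, i, hi, hprog i hi⟩

theorem div_two_pow_le_mul_two_zpow_neg {T x l L : ℕ} (hT : T ≤ x) (hl : l ≤ L) :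
    (T : ℝ) / 2 ^ L ≤ x * 2 ^ (-(l : ℤ)) := by
  rw [zpow_neg, zpow_natCast, ← div_eq_mul_inv]
  exact div_le_div₀ (by positivity) (by exact_mod_cast hT) (by positivity)
    (pow_le_pow_right₀ one_le_two hl)

/-- For an infinite r.e. set `A` and total recursive `f` with `f n → ∞`,
the sum `∑_{p : U p ∈ A} f (|p|) 2^(-|p|)` diverges to infinity. -/
theorem sum_over_programs_diverges (U : OptimalComputer) (A : Set Str)
    (hA : A.Infinite) (hre : REset A)
    (f : ℕ → ℕ) (hf : Computable f) (hlim : Tendsto f atTop atTop) :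
    ∀ B : ℝ, ∃ F : Finset Str,
      B ≤ ∑ p ∈ F, Set.indicator {p : Str | ∃ s ∈ A, s ∈ U.f p}
        (fun p => (f p.length : ℝ) * 2 ^ (-(p.length : ℤ))) p := by
  obtain ⟨e, he, he_inj, heA⟩ := hre.exists_computable_injective hA
  have hL : Primrec fun m : ℕ => 2 * m + 1 :=
    Primrec.succ.comp (Primrec.nat_mul.comp (Primrec.const 2) Primrec.id)
  have hT : Primrec fun m : ℕ => m * 2 ^ (2 * m + 1) :=
    Primrec.nat_mul.comp Primrec.id
      ((Primrec₂.unpaired'.1 Nat.Primrec.pow).comp (Primrec.const 2) hL)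
  obtain ⟨n, hn, hwin⟩ := exists_computable_window hf hlim hT.to_comp hL.to_comp
  obtain ⟨sim, hsim⟩ :=
    U.optimal (blockComputer (Computable.succ.comp hn) (he.comp Computable.encode))
  intro B
  obtain ⟨m₀, hB⟩ := exists_nat_ge B
  set m := max m₀ (sim + 1)
  have hm : m₀ ≤ m ∧ sim + 1 ≤ m := ⟨le_max_left _ _, le_max_right _ _⟩
  obtain ⟨S, hcard, hS⟩ := U.exists_finset_programs (I := strsOfLength (n m + 1))
    (he_inj.comp Encodable.encode_injective).injOn (L := n m + (2 * m + 1)) fun w hw => by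
      obtain ⟨p, hp, hlen⟩ := hsim _ _ (mem_blockComputer _ _ (mem_strsOfLength.1 hw))
      rw [length_blockProgram, mem_strsOfLength.1 hw] at hlen
      exact ⟨p, hp, by omega⟩
  refine ⟨S, hB.trans ?_⟩
  calc (m₀ : ℝ) ≤ m := by exact_mod_cast hm.1
    _ = 2 ^ n m * ((m * 2 ^ (2 * m + 1) : ℕ) / 2 ^ (n m + (2 * m + 1)) : ℝ) := by
        push_cast
        rw [pow_add (2 : ℝ) (n m)]
        field_simp
    _ ≤ _ := le_sum_of_two_pow_succ_le_card (by simp [hcard])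
        (fun p _ => Set.indicator_nonneg (fun _ _ => by positivity) _) (fun p hp hlen => ?_)
        (by positivity)
  obtain ⟨hle, w, -, hpw⟩ := hS p hp
  rw [Set.indicator_of_mem (show p ∈ {p : Str | ∃ s ∈ A, s ∈ U.f p} from ⟨_, heA _, hpw⟩)]
  obtain ⟨k, hk⟩ := Nat.exists_eq_add_of_le hlen
  rw [hk] at hle ⊢
  exact div_two_pow_le_mul_two_zpow_neg (hwin m k (by omega)) hle

end Paper
end

section
/- Let m be a universal probability and 0 < q < 1. Then ∑_{s∈{0,1}*} m(s)^q diverges to infinity. -/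
open Filter Topology

/-!
Let `r(s) = 2^{-|s|} / ((|s|+1)(|s|+2))`. Its values are reciprocals of natural numbers
computed from `|s|`, so it is lower-computable, and its mass is at most
`∑ₙ 1/((n+1)(n+2)) = 1`, so it is a semi-measure. Universality gives `m ≥ c·r`, hence the `2ⁿ` strings of length `n` contribute at
least `c^q (2^{1-q})ⁿ / ((n+1)(n+2))` to `∑ m(s)^q`, and this is unbounded in `n`.
-/

open Finset

namespace Nat

def euclidStep (p : ℕ × ℕ) : ℕ × ℕ := if p.1 = 0 then p else (p.2 % p.1, p.1)

theorem euclidStep_iterate (k a b : ℕ) (hak : a < k) : euclidStep^[k] (a, b) = (0, gcd a b) := by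
  induction k using Nat.strong_induction_on generalizing a b with
  | _ k ih =>
    rcases Nat.eq_zero_or_pos a with rfl | ha
    · rw [Function.iterate_fixed (by simp [euclidStep]), gcd_zero_left]
    · obtain ⟨k, rfl⟩ : ∃ k', k = k' + 1 := ⟨k - 1, by omega⟩
      rw [Function.iterate_succ_apply, euclidStep, if_neg ha.ne',
        ih k k.lt_succ_self _ _ ((mod_lt b ha).trans_le (by omega)), ← gcd_rec]

end Nat

theorem Primrec.nat_gcd : Primrec₂ Nat.gcd := by
  have hstep : Primrec Nat.euclidStep :=
    Primrec.ite (Primrec.eq.comp Primrec.fst (Primrec.const 0)) Primrec.id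
      (Primrec.pair (Primrec.nat_mod.comp Primrec.snd Primrec.fst) Primrec.fst)
  have hiter : Primrec fun p : ℕ × ℕ => (Nat.euclidStep^[p.1 + 1] p).2 :=
    Primrec.snd.comp <| Primrec.nat_iterate (Primrec.succ.comp Primrec.fst) Primrec.id
      (hstep.comp Primrec.snd).to₂
  exact hiter.of_eq fun p => by rw [Nat.euclidStep_iterate _ _ _ p.1.lt_succ_self]

theorem Int.natAbs_denumerable_ofNat (a : ℕ) :
    (Denumerable.ofNat ℤ a).natAbs = a / 2 + a % 2 := by
  conv_rhs => rw [← Denumerable.encode_ofNat (α := ℤ) a]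
  rcases Denumerable.ofNat ℤ a with n | n
  · change n = 2 * n / 2 + 2 * n % 2; omega
  · change n + 1 = (2 * n + 1) / 2 + (2 * n + 1) % 2; omega

namespace Rat

/-- The codes `Nat.pair (encode num) den` of `Rat.instEncodable`; `a / 2 + a % 2` is the absolute
value of the integer with code `a`. -/
def IsCode (y : ℕ) : Prop :=
  0 < y.unpair.2 ∧ Nat.Coprime (y.unpair.1 / 2 + y.unpair.1 % 2) y.unpair.2

instance : DecidablePred IsCode := fun _ => instDecidableAnd

theorem primrecPred_isCode : PrimrecPred IsCode := by
  refine PrimrecPred.and (Primrec.nat_lt.comp (Primrec.const 0) (Primrec.snd.comp Primrec.unpair))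
    (Primrec.eq.comp (Primrec.nat_gcd.comp ?_ (Primrec.snd.comp Primrec.unpair)) (Primrec.const 1))
  have hfst := Primrec.fst.comp Primrec.unpair
  exact Primrec.nat_add.comp (Primrec.nat_div.comp hfst (Primrec.const 2))
    (Primrec.nat_mod.comp hfst (Primrec.const 2))

theorem mem_range_encode_iff_isCode (y : ℕ) :
    y ∈ Set.range (@Encodable.encode ℚ instEncodable) ↔ IsCode y := by
  constructor
  · rintro ⟨q, rfl⟩
    change IsCode (Nat.pair (Encodable.encode q.num) q.den)
    rw [IsCode, Nat.unpair_pair, ← Int.natAbs_denumerable_ofNat, Denumerable.ofNat_encode]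
    exact ⟨q.pos, q.reduced⟩
  · rintro ⟨hden, hcop⟩
    refine ⟨⟨Denumerable.ofNat ℤ y.unpair.1, y.unpair.2, hden.ne',
      by rwa [Int.natAbs_denumerable_ofNat]⟩, ?_⟩
    change Nat.pair (Encodable.encode (Denumerable.ofNat ℤ y.unpair.1)) y.unpair.2 = y
    rw [Denumerable.encode_ofNat, Nat.pair_unpair]

/-- The `Primcodable ℚ` instance comes from `Denumerable.ofEncodableOfInfinite`: it numbers the
rationals by counting the valid `instEncodable` codes below theirs. -/
theorem primcodable_encode_eq (q : ℚ) : @Encodable.encode ℚ Primcodable.toEncodable q =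
    ((List.range (Nat.pair (Encodable.encode q.num) q.den)).filter (IsCode ·)).length := by
  rw [← List.countP_eq_length_filter]
  change List.countP (fun y => @decide _ (Encodable.decidableRangeEncode ℚ y)) _ = _
  refine List.countP_congr fun y _ => ?_
  simpa using mem_range_encode_iff_isCode y

end Rat

theorem Primrec.rat_of_num_den {α : Type*} [Primcodable α] {f : α → ℚ}
    (hnum : Primrec fun a => (f a).num) (hden : Primrec fun a => (f a).den) : Primrec f := by
  refine Primrec.encode_iff.mp ?_
  simp only [Rat.primcodable_encode_eq]
  exact Primrec.list_length.comp <| (Primrec.listFilter Rat.primrecPred_isCode).comp <|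
    Primrec.list_range.comp <| Primrec₂.natPair.comp (Primrec.encode.comp hnum) hden

theorem Primrec.rat_inv_natCast : Primrec fun n : ℕ => (n : ℚ)⁻¹ := by
  refine Primrec.rat_of_num_den ?_ ?_
  · refine (Primrec.ite (Primrec.eq.comp Primrec.id (Primrec.const 0)) (Primrec.const 0)
      (Primrec.const 1)).of_eq fun n => ?_
    rw [Rat.inv_natCast_num]
    rcases n with _ | n <;> simp
  · simp only [Rat.inv_natCast_den]
    exact Primrec.ite (Primrec.eq.comp Primrec.id (Primrec.const 0)) (Primrec.const 1) Primrec.id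

section Words

variable (α : Type*) [Fintype α]

def wordsOfLength (n : ℕ) : Finset (List α) :=
  (univ : Finset (List.Vector α n)).map ⟨List.Vector.toList, List.Vector.toList_injective⟩

variable {α}

theorem mem_wordsOfLength {n : ℕ} {s : List α} : s ∈ wordsOfLength α n ↔ s.length = n := by
  refine ⟨fun hs => ?_, fun h => mem_map.2 ⟨⟨s, h⟩, mem_univ _, rfl⟩⟩
  obtain ⟨v, -, rfl⟩ := mem_map.1 hs
  exact v.toList_length

theorem card_wordsOfLength (n : ℕ) : #(wordsOfLength α n) = Fintype.card α ^ n := by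
  simp [wordsOfLength, card_vector]

theorem card_filter_length_eq_le (F : Finset (List α)) (n : ℕ) :
    #{s ∈ F | s.length = n} ≤ Fintype.card α ^ n :=
  card_wordsOfLength (α := α) n ▸
    card_le_card fun _ hs => mem_wordsOfLength.2 (mem_filter.1 hs).2

theorem sum_div_card_pow_length_le [Nonempty α] (F : Finset (List α)) {g : ℕ → ℝ}
    (hg : ∀ n, 0 ≤ g n) :
    ∑ s ∈ F, g s.length / Fintype.card α ^ s.length ≤
      ∑ n ∈ range (F.sup List.length + 1), g n := by
  rw [← sum_fiberwise_of_maps_to fun s hs => mem_range.2 (Nat.lt_succ_of_le (le_sup hs))]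
  refine sum_le_sum fun n _ => ?_
  have hpos : (0 : ℝ) < Fintype.card α ^ n := by positivity
  calc ∑ s ∈ F with s.length = n, g s.length / Fintype.card α ^ s.length
      = #{s ∈ F | s.length = n} * (g n / Fintype.card α ^ n) := by
        rw [← nsmul_eq_mul, ← sum_const]
        exact sum_congr rfl fun s hs => by rw [(mem_filter.1 hs).2]
    _ ≤ Fintype.card α ^ n * (g n / Fintype.card α ^ n) := by
        gcongr
        · exact div_nonneg (hg n) hpos.le
        · exact_mod_cast card_filter_length_eq_le F n
    _ = g n := mul_div_cancel₀ _ hpos.ne'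

end Words

theorem sum_range_inv_succ_mul_add_two (N : ℕ) :
    ∑ n ∈ range N, ((n + 1 : ℝ) * (n + 2))⁻¹ = 1 - (N + 1 : ℝ)⁻¹ := by
  induction N with
  | zero => norm_num
  | succ N ih =>
    rw [sum_range_succ, ih]
    push_cast
    field_simp
    ring

theorem tendsto_pow_div_succ_mul_add_two {x : ℝ} (hx : 1 < x) :
    Tendsto (fun n : ℕ => x ^ n / ((n + 1) * (n + 2))) atTop atTop := by
  have hx0 : 0 < x := zero_lt_one.trans hx
  have hshift : Tendsto (fun n : ℕ => ((n + 2 : ℕ) : ℝ) ^ 2 / x ^ (n + 2)) atTop (𝓝 0) :=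
    (tendsto_add_atTop_iff_nat 2).2 (tendsto_pow_const_div_const_pow_of_one_lt 2 hx)
  have hzero : Tendsto (fun n : ℕ => ((n + 2 : ℝ) ^ 2 / x ^ n)) atTop (𝓝[>] 0) := by
    refine tendsto_nhdsWithin_iff.2 ⟨?_, Eventually.of_forall fun n => ?_⟩
    · convert hshift.const_mul (x ^ 2) using 2 with n
      · push_cast
        field_simp
        ring
      · simp
    · exact div_pos (by positivity) (pow_pos hx0 n)
  refine tendsto_atTop_mono (fun n => ?_) hzero.inv_tendsto_nhdsGT_zero
  rw [Pi.inv_apply, inv_div]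
  gcongr
  linarith

theorem mul_rpow_div_le_two_pow_mul_rpow {c D q : ℝ} (n : ℕ) (hc : 0 ≤ c) (hD : 1 ≤ D)
    (hq : q ≤ 1) : c ^ q * (((2 : ℝ) ^ (1 - q)) ^ n / D) ≤ 2 ^ n * (c / (2 ^ n * D)) ^ q := by
  have hD0 : 0 < D := by linarith
  rw [Real.div_rpow hc (by positivity), Real.mul_rpow (by positivity) hD0.le, ← Real.rpow_natCast,
    ← Real.rpow_natCast 2 n, ← Real.rpow_mul zero_le_two, ← Real.rpow_mul zero_le_two]
  have hDq : D ^ q ≤ D := by simpa using Real.rpow_le_rpow_of_exponent_le hD hq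
  calc c ^ q * (2 ^ ((1 - q) * n) / D) ≤ c ^ q * (2 ^ ((1 - q) * n) / D ^ q) := by
        gcongr
    _ = 2 ^ (n : ℝ) * (c ^ q / (2 ^ (n * q) * D ^ q)) := by
        rw [show (1 - q) * n = n - n * q by ring, Real.rpow_sub two_pos]
        ring

namespace Paper

def lengthWeight (s : Str) : ℚ :=
  ((2 ^ s.length * ((s.length + 1) * (s.length + 2)) : ℕ) : ℚ)⁻¹

theorem lengthWeight_cast (s : Str) :
    (lengthWeight s : ℝ) = ((s.length + 1 : ℝ) * (s.length + 2))⁻¹ / 2 ^ s.length := by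
  rw [lengthWeight]
  push_cast
  rw [mul_comm, div_eq_mul_inv, mul_inv]

theorem primrec_lengthWeight : Primrec lengthWeight :=
  Primrec.rat_inv_natCast.comp <| Primrec.nat_mul.comp
    ((Primrec₂.unpaired'.mp Nat.Primrec.pow).comp (Primrec.const 2) Primrec.list_length)
    (Primrec.nat_mul.comp (Primrec.succ.comp Primrec.list_length)
      (Primrec.nat_add.comp Primrec.list_length (Primrec.const 2)))

theorem lcSemiMeasure_lengthWeight : LCSemiMeasure fun s => (lengthWeight s : ℝ) := by
  have hnonneg (s : Str) : 0 ≤ lengthWeight s := inv_nonneg.2 (Nat.cast_nonneg _)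
  refine ⟨⟨fun s => ⟨Rat.cast_nonneg.2 (hnonneg s), ?_⟩, fun F => ?_⟩,
    fun _ s => lengthWeight s, (primrec_lengthWeight.comp Primrec.snd).to_comp,
    fun s => ⟨fun _ => ⟨hnonneg s, le_rfl⟩, tendsto_const_nhds⟩⟩
  · simp only [lengthWeight, Rat.cast_inv, Rat.cast_natCast]
    exact inv_le_one_of_one_le₀ (Nat.one_le_cast.2 (Nat.succ_le_of_lt (by positivity)))
  · have h := sum_div_card_pow_length_le F (g := fun n => ((n + 1 : ℝ) * (n + 2))⁻¹)
      fun n => by positivity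
    simp only [Fintype.card_bool, Nat.cast_ofNat, sum_range_inv_succ_mul_add_two] at h
    simp only [lengthWeight_cast]
    have htail : (0 : ℝ) ≤ (((F.sup List.length + 1 : ℕ) : ℝ) + 1)⁻¹ := by positivity
    linarith

/-- For a universal probability `m` and `0 < q < 1`, the power sum `∑ s, m s ^ q`
diverges to infinity. -/
theorem power_sum_diverges_of_lt_one (m : Str → ℝ) (hm : UniversalProb m)
    (q : ℝ) (h0 : 0 < q) (h1 : q < 1) :
    ∀ B : ℝ, ∃ F : Finset Str, B ≤ ∑ s ∈ F, m s ^ q := by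
  intro B
  obtain ⟨c, hc, hdom⟩ := hm.2 _ lcSemiMeasure_lengthWeight
  have hgrowth := (tendsto_pow_div_succ_mul_add_two
    (Real.one_lt_rpow one_lt_two (sub_pos.2 h1))).const_mul_atTop (Real.rpow_pos_of_pos hc q)
  obtain ⟨n, hn⟩ := (hgrowth.eventually_ge_atTop B).exists
  refine ⟨wordsOfLength Bool n, hn.trans ?_⟩
  have hword (s : Str) (hs : s ∈ wordsOfLength Bool n) :
      (c / (2 ^ n * ((n + 1) * (n + 2)))) ^ q ≤ m s ^ q := by
    refine Real.rpow_le_rpow (by positivity) ((le_of_eq ?_).trans (hdom s)) h0.le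
    rw [lengthWeight_cast, mem_wordsOfLength.1 hs]
    field_simp
  calc c ^ q * (((2 : ℝ) ^ (1 - q)) ^ n / ((n + 1) * (n + 2)))
      ≤ 2 ^ n * (c / (2 ^ n * ((n + 1) * (n + 2)))) ^ q :=
        mul_rpow_div_le_two_pow_mul_rpow n hc.le
          (by nlinarith [(n.cast_nonneg : (0 : ℝ) ≤ n)]) h1.le
    _ ≤ ∑ s ∈ wordsOfLength Bool n, m s ^ q := by
        simpa [card_wordsOfLength] using card_nsmul_le_sum _ _ _ hword

end Paper
end
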